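/- Every proper sub-disjunction of a clause carries strictly more information: let φ = L₁ ∨ ⋯ ∨ L_k be a clause, i.e. a disjunction of k ≥ 2 literals whose underlying atoms are pairwise distinct, and let S be a nonempty proper subset of {1, …, k}. Then I(⋁_{i∈S} L_i) > I(φ); hence every cut of φ into a proper sub-disjunction is bad. -/

import Mathlib

/-- Propositional formulas over atoms `V`: `var v | ¬φ | φ ∧ φ | φ ∨ φ`. -/
inductive PropForm (V : Type*) where
  | var : V → PropForm V
  | not : PropForm V → PropForm V
  | and : PropForm V → PropForm V → PropForm V
  | or  : PropForm V → PropForm V → PropForm V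

namespace PropForm

variable {V : Type*}

/-- Boolean semantics: `w ⊨ φ`. -/
def eval (w : V → Bool) : PropForm V → Bool
  | var v => w v
  | not φ => !(eval w φ)
  | and φ ψ => eval w φ && eval w ψ
  | or φ ψ => eval w φ || eval w ψ

end PropForm

variable {V : Type*}

/-- `Content φ` : the finite set of worlds (valuations `V → Bool`) satisfying `φ`. -/
def Content [Fintype V] [DecidableEq V] (φ : PropForm V) : Finset (V → Bool) :=
  Finset.univ.filter fun w => φ.eval w = true

/-- Information content `I(φ) = -log₂(|Content φ| / 2 ^ n)` in the extended reals,
with `I(φ) = +∞` when `Content φ = ∅`. -/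
noncomputable def infoContent [Fintype V] [DecidableEq V] (φ : PropForm V) : EReal :=
  if (Content φ).card = 0 then ⊤
  else (((- Real.logb 2 (((Content φ).card : ℝ) / 2 ^ Fintype.card V)) : ℝ) : EReal)

/-- The disjunction `D 0 ∨ D 1 ∨ ⋯ ∨ D (k-1)` (left-associated), for `k ≥ 1`. -/
def bigOr {k : ℕ} (hk : 0 < k) (D : Fin k → PropForm V) : PropForm V :=
  ((List.ofFn D).tail).foldl PropForm.or (D ⟨0, hk⟩)

/-- The conjunction `C 0 ∧ C 1 ∧ ⋯ ∧ C (m-1)` (left-associated), for `m ≥ 1`. -/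
def bigAnd {m : ℕ} (hm : 0 < m) (C : Fin m → PropForm V) : PropForm V :=
  ((List.ofFn C).tail).foldl PropForm.and (C ⟨0, hm⟩)

/-- The disjunction `⋁_{i ∈ S} D i` over a nonempty finite index set `S`. -/
noncomputable def finsetOr {k : ℕ} (D : Fin k → PropForm V) (S : Finset (Fin k)) (hS : S.Nonempty) :
    PropForm V :=
  (((S.erase (S.min' hS)).toList).map D).foldl PropForm.or (D (S.min' hS))

/-- A literal: a positive or negated atom. -/
inductive Literal (V : Type*) where
  | pos : V → Literal V
  | neg : V → Literal V

/-- The underlying atom of a literal. -/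
def Literal.atom : Literal V → V
  | .pos v => v
  | .neg v => v

/-- The formula corresponding to a literal. -/
def Literal.toForm : Literal V → PropForm V
  | .pos v => .var v
  | .neg v => .not (.var v)

/-- `φ` is a literal formula: `var v` or `¬(var v)`. -/
inductive IsLiteral : PropForm V → Prop
  | var (v : V) : IsLiteral (.var v)
  | negVar (v : V) : IsLiteral (.not (.var v))

/-- `φ` is a clause: a finite disjunction of literals. -/
inductive IsClause : PropForm V → Prop
  | lit {φ : PropForm V} : IsLiteral φ → IsClause φ
  | or {φ ψ : PropForm V} : IsClause φ → IsClause ψ → IsClause (φ.or ψ)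

/-- Immediate (direct) subformula relation. -/
inductive DirectSubform : PropForm V → PropForm V → Prop
  | notArg (φ : PropForm V) : DirectSubform φ (.not φ)
  | andLeft (φ ψ : PropForm V) : DirectSubform φ (.and φ ψ)
  | andRight (φ ψ : PropForm V) : DirectSubform ψ (.and φ ψ)
  | orLeft (φ ψ : PropForm V) : DirectSubform φ (.or φ ψ)
  | orRight (φ ψ : PropForm V) : DirectSubform ψ (.or φ ψ)

/-- `ψ` is a strict subformula of `φ`. -/
def StrictSubform (ψ φ : PropForm V) : Prop := Relation.TransGen DirectSubform ψ φ

/-- `φ` is atomic: it admits no safe cut, i.e. every strict subformula `ψ`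
satisfies `I(ψ) ≥ I(φ)`. -/
def Atomic [Fintype V] [DecidableEq V] (φ : PropForm V) : Prop :=
  ∀ ψ : PropForm V, StrictSubform ψ φ → infoContent φ ≤ infoContent ψ

/-!
Enlarging a disjunction can only enlarge its set of models, so `Content (⋁_{i ∈ S} Lᵢ) ⊆ Content φ`,
and `I` is strictly antitone in the number of models. Because the atoms are pairwise distinct,
the literals can be given any truth values independently: one world makes every literal true
(so the sub-disjunction has a model) and another makes `L j` true for some `j ∉ S` and all `Lᵢ`,
`i ∈ S`, false, so the inclusion is strict.
-/

def Literal.isNeg : Literal V → Bool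
  | .pos _ => false
  | .neg _ => true

lemma Literal.eval_toForm (l : Literal V) (w : V → Bool) :
    l.toForm.eval w = (w l.atom ^^ l.isNeg) := by
  cases l <;> simp [Literal.toForm, Literal.atom, Literal.isNeg, PropForm.eval]

lemma Literal.exists_world_eval_eq {ι : Type*} {L : ι → Literal V}
    (hL : Function.Injective fun i => (L i).atom) (b : ι → Bool) :
    ∃ w : V → Bool, ∀ i, (L i).toForm.eval w = b i := by
  refine ⟨Function.extend (fun i => (L i).atom) (fun i => b i ^^ (L i).isNeg) fun _ => false,
    fun i => ?_⟩
  rw [Literal.eval_toForm, hL.extend_apply, Bool.xor_assoc, Bool.xor_self, Bool.xor_false]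

lemma PropForm.eval_foldl_or (w : V → Bool) :
    ∀ (l : List (PropForm V)) (a : PropForm V),
      (l.foldl PropForm.or a).eval w = (a.eval w || l.any fun ψ => ψ.eval w)
  | [], a => by simp
  | φ :: l, a => by simp [eval_foldl_or w l, PropForm.eval, Bool.or_assoc]

lemma eval_bigOr {k : ℕ} (hk : 0 < k) (D : Fin k → PropForm V) (w : V → Bool) :
    (bigOr hk D).eval w = true ↔ ∃ i, (D i).eval w = true := by
  obtain ⟨k, rfl⟩ : ∃ k', k = k' + 1 := ⟨k - 1, by omega⟩
  simp [bigOr, List.ofFn_succ, PropForm.eval_foldl_or, Fin.exists_fin_succ]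

lemma eval_finsetOr {k : ℕ} (D : Fin k → PropForm V) (S : Finset (Fin k))
    (hS : S.Nonempty) (w : V → Bool) :
    (finsetOr D S hS).eval w = true ↔ ∃ i ∈ S, (D i).eval w = true := by
  simp only [finsetOr, PropForm.eval_foldl_or, Bool.or_eq_true, List.any_eq_true, List.mem_map,
    Finset.mem_toList, Finset.mem_erase]
  constructor
  · rintro (h | ⟨_, ⟨i, ⟨-, hi⟩, rfl⟩, h⟩)
    exacts [⟨_, S.min'_mem hS, h⟩, ⟨i, hi, h⟩]
  · rintro ⟨i, hi, h⟩
    by_cases hmin : i = S.min' hS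
    · exact Or.inl (hmin ▸ h)
    · exact Or.inr ⟨D i, ⟨i, ⟨hmin, hi⟩, rfl⟩, h⟩

section Content

variable [Fintype V] [DecidableEq V]

@[simp]
lemma mem_Content {φ : PropForm V} {w : V → Bool} : w ∈ Content φ ↔ φ.eval w = true := by
  simp [Content]

lemma Content_finsetOr_subset_bigOr {k : ℕ} (hk : 0 < k) (D : Fin k → PropForm V)
    (S : Finset (Fin k)) (hS : S.Nonempty) : Content (finsetOr D S hS) ⊆ Content (bigOr hk D) :=
  fun w hw => by
    obtain ⟨i, -, hi⟩ := (eval_finsetOr D S hS w).mp (mem_Content.mp hw)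
    exact mem_Content.mpr ((eval_bigOr hk D w).mpr ⟨i, hi⟩)

lemma infoContent_lt_of_ssubset {φ ψ : PropForm V} (hψ : (Content ψ).Nonempty)
    (h : Content ψ ⊂ Content φ) : infoContent φ < infoContent ψ := by
  have hcard := Finset.card_lt_card h
  have hψ₀ : 0 < (Content ψ).card := hψ.card_pos
  unfold infoContent
  rw [if_neg hψ₀.ne', if_neg (by omega), EReal.coe_lt_coe_iff, neg_lt_neg_iff]
  have h2 : (0 : ℝ) < 2 ^ Fintype.card V := by positivity
  apply Real.logb_lt_logb one_lt_two (by positivity)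
  exact (div_lt_div_iff_of_pos_right h2).mpr (by exact_mod_cast hcard)

end Content

/-- Every proper sub-disjunction of a clause carries strictly more
information: if `φ = L 0 ∨ ⋯ ∨ L (k-1)` is a clause of `k ≥ 2` literals with pairwise
distinct atoms and `S` is a nonempty proper subset of indices, then
`I(⋁_{i ∈ S} L i) > I(φ)`: every cut of `φ` into a proper sub-disjunction is bad. -/
theorem clause_subdisj_bad_cut {V : Type*} [Fintype V] [DecidableEq V] {k : ℕ}
    (hk : 2 ≤ k) (L : Fin k → Literal V)
    (hdist : Function.Injective fun i => (L i).atom)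
    (S : Finset (Fin k)) (hS : S.Nonempty) (hS' : S ≠ Finset.univ) :
    infoContent (bigOr (by omega : 0 < k) fun i => (L i).toForm) <
      infoContent (finsetOr (fun i => (L i).toForm) S hS) := by
  obtain ⟨j, hj⟩ := not_forall.mp (mt Finset.eq_univ_of_forall hS')
  obtain ⟨w₀, hw₀⟩ := Literal.exists_world_eval_eq hdist fun _ => true
  obtain ⟨w₁, hw₁⟩ := Literal.exists_world_eval_eq hdist fun i => decide (i ∉ S)
  have hw₀_mem : w₀ ∈ Content (finsetOr (fun i => (L i).toForm) S hS) :=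
    mem_Content.mpr ((eval_finsetOr _ S hS w₀).mpr ⟨hS.choose, hS.choose_spec, hw₀ _⟩)
  have hw₁_mem : w₁ ∈ Content (bigOr (by omega : 0 < k) fun i => (L i).toForm) :=
    mem_Content.mpr ((eval_bigOr _ _ w₁).mpr ⟨j, by simpa [hj] using hw₁ j⟩)
  have hw₁_not_mem : w₁ ∉ Content (finsetOr (fun i => (L i).toForm) S hS) := by
    rw [mem_Content, eval_finsetOr]
    rintro ⟨i, hi, h⟩
    simp [hw₁ i, hi] at h
  exact infoContent_lt_of_ssubset ⟨w₀, hw₀_mem⟩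
    (Finset.ssubset_iff_of_subset (Content_finsetOr_subset_bigOr _ _ S hS) |>.mpr
      ⟨w₁, hw₁_mem, hw₁_not_mem⟩)
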